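/- For n ≥ 1, the number of pairs (σ₁,σ₂) ∈ S_n × S_n such that ⟨σ₁,σ₂⟩ acts transitively on {1,…,n} is divisible by (n-1)!. -/

import Mathlib

/-! The stabilizer of a point `a` in `Sym(α)`, a group of order `(|α| - 1)!`, acts by simultaneous
conjugation on the pairs generating a transitive subgroup, and it acts freely: a permutation
commuting with a transitive group is determined by the image of one point, so if it fixes `a`
it is the identity. Hence every orbit has `(|α| - 1)!` elements. -/

open Equiv MulAction ConjAct

theorem MulAction.card_dvd_card_of_stabilizer_eq_bot {G X : Type*} [Group G] [MulAction G X]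
    (h : ∀ x : X, stabilizer G x = ⊥) : Nat.card G ∣ Nat.card X := by
  rw [Nat.card_congr (selfEquivOrbitsQuotientProd h), Nat.card_prod]
  exact dvd_mul_left _ _

namespace Equiv.Perm

variable {α : Type*}

theorem card_stabilizer [Finite α] (a : α) :
    Nat.card (stabilizer (Perm α) a) = (Nat.card α - 1).factorial := by
  have : Nonempty α := ⟨a⟩
  have h := (stabilizer (Perm α) a).card_mul_index
  rw [index_stabilizer_of_transitive, Nat.card_perm, ← Nat.mul_factorial_pred Nat.card_pos.ne',
    mul_comm] at h
  exact Nat.eq_of_mul_eq_mul_left Nat.card_pos h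

theorem exists_apply_eq_of_map_conj {H : Subgroup (Perm α)} (hH : ∀ x y, ∃ g ∈ H, g x = y)
    (τ : Perm α) (x y : α) : ∃ g ∈ H.map (MulAut.conj τ).toMonoidHom, g x = y := by
  obtain ⟨g, hg, hgxy⟩ := hH (τ⁻¹ x) (τ⁻¹ y)
  refine ⟨τ * g * τ⁻¹, Subgroup.mem_map_of_mem _ hg, ?_⟩
  show τ (g (τ⁻¹ x)) = y
  rw [hgxy]
  exact τ.apply_symm_apply y

theorem eq_one_of_mem_centralizer {H : Subgroup (Perm α)} (hH : ∀ x y, ∃ g ∈ H, g x = y)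
    {τ : Perm α} (hτ : τ ∈ Subgroup.centralizer H) {a : α} (ha : τ a = a) : τ = 1 := by
  ext x
  obtain ⟨g, hg, rfl⟩ := hH a x
  calc τ (g a) = g (τ a) := congrFun (congrArg DFunLike.coe (hτ g hg)).symm a
    _ = g a := by rw [ha]

def transitivePairs (α : Type*) : SubMulAction (ConjAct (Perm α)) (Perm α × Perm α) where
  carrier := {p | ∀ x y, ∃ g ∈ Subgroup.closure {p.1, p.2}, g x = y}
  smul_mem' c p hp := by
    have hmap : Subgroup.closure {(c • p).1, (c • p).2} =
        (Subgroup.closure {p.1, p.2}).map (MulAut.conj (ofConjAct c)).toMonoidHom := by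
      rw [MonoidHom.map_closure, Set.image_pair]
      rfl
    simpa only [Set.mem_ofPred_eq, hmap] using exists_apply_eq_of_map_conj hp (ofConjAct c)

theorem stabilizer_transitivePairs_eq_bot (a : α) (p : transitivePairs α) :
    stabilizer ((stabilizer (Perm α) a).map
      (toConjAct : Perm α ≃* ConjAct (Perm α)).toMonoidHom) p = ⊥ := by
  rw [Subgroup.eq_bot_iff_forall]
  rintro ⟨_, τ, hτa, rfl⟩ hfix
  obtain ⟨h₁, h₂⟩ := Prod.ext_iff.mp (congrArg Subtype.val hfix)
  have hτ : τ ∈ Subgroup.centralizer (Subgroup.closure {p.1.1, p.1.2}) := by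
    rw [Subgroup.centralizer_closure]
    rintro q (rfl | rfl)
    · exact (mul_inv_eq_iff_eq_mul.mp h₁).symm
    · exact (mul_inv_eq_iff_eq_mul.mp h₂).symm
  simp only [eq_one_of_mem_centralizer p.2 hτ hτa, map_one]
  rfl

theorem factorial_dvd_ncard_transitivePairs [Finite α] :
    (Nat.card α - 1).factorial ∣ (transitivePairs α : Set (Perm α × Perm α)).ncard := by
  rcases isEmpty_or_nonempty α with _ | ⟨⟨a⟩⟩
  · simp
  rw [← card_stabilizer a, ← Nat.card_coe_set_eq,
    ← Subgroup.card_map_of_injective (f := (toConjAct : Perm α ≃* ConjAct (Perm α)).toMonoidHom)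
      toConjAct.injective]
  exact card_dvd_card_of_stabilizer_eq_bot (stabilizer_transitivePairs_eq_bot a)

end Equiv.Perm

theorem stmt3_general (n : ℕ) :
    Nat.factorial (n - 1) ∣
      Set.ncard { p : Equiv.Perm (Fin n) × Equiv.Perm (Fin n) |
        ∀ x y : Fin n,
          ∃ g ∈ Subgroup.closure ({p.1, p.2} : Set (Equiv.Perm (Fin n))), g x = y } := by
  have h := Perm.factorial_dvd_ncard_transitivePairs (α := Fin n)
  rw [Nat.card_fin] at h
  exact h

/-- `(n-1)!` divides the number of pairs `(σ₁,σ₂)` of permutations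
of `{1,…,n}` generating a transitive subgroup. -/
theorem stmt3 (n : ℕ) (hn : 1 ≤ n) :
    Nat.factorial (n - 1) ∣
      Set.ncard { p : Equiv.Perm (Fin n) × Equiv.Perm (Fin n) |
        ∀ x y : Fin n,
          ∃ g ∈ Subgroup.closure ({p.1, p.2} : Set (Equiv.Perm (Fin n))), g x = y } :=
  stmt3_general n
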